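/- Let m ≥ 1, k ≥ 0, let D be an m×m diagonal real matrix, let Λ be an m×k real matrix, and let c ∈ ℝ^k. Then S(D + (Λ + 𝟙cᵀ)(Λ + 𝟙cᵀ)ᵀ) = S(D + ΛΛᵀ); that is, translating every row of Λ by the same vector c leaves the matrix S of the factored covariance model unchanged. -/

import Mathlib

/-- The map `S` sending a covariance matrix `Σ` to the matrix of variances of
differences: `S(Σ)_{ij} = σ_ii + σ_jj - 2 σ_ij`. -/
def Smap {m : ℕ} (Cov : Matrix (Fin m) (Fin m) ℝ) : Matrix (Fin m) (Fin m) ℝ :=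
  Matrix.of fun i j => Cov i i + Cov j j - 2 * Cov i j

/-!
With `u = Λ c`, the translated Gram matrix is `ΛΛᵀ + u𝟙ᵀ + 𝟙uᵀ + (cᵀc) 𝟙𝟙ᵀ`, which differs from
`ΛΛᵀ` by the matrix with entries `v i + v j`, where `v = u + (cᵀc / 2) 𝟙`. Such a perturbation
changes every `σ_ii + σ_jj - 2 σ_ij` by `2 v i + 2 v j - 2 (v i + v j) = 0`.
-/

open Matrix

theorem Matrix.add_one_vecMulVec_mul_transpose {m n R : Type*} [Fintype n] [CommRing R]
    (Λ : Matrix m n R) (c : n → R) :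
    (Λ + vecMulVec 1 c) * (Λ + vecMulVec 1 c)ᵀ
      = Λ * Λᵀ + vecMulVec (Λ *ᵥ c) 1 + vecMulVec 1 (Λ *ᵥ c) + (c ⬝ᵥ c) • vecMulVec 1 1 := by
  rw [transpose_add, transpose_vecMulVec, Matrix.add_mul, Matrix.mul_add, Matrix.mul_add,
    mul_vecMulVec, vecMulVec_mul, vecMul_transpose, vecMulVec_mul_vecMulVec, vecMulVec_smul,
    ← add_assoc]

theorem Smap_add_of_apply_eq_add {m : ℕ} (A B : Matrix (Fin m) (Fin m) ℝ) (v : Fin m → ℝ)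
    (hB : ∀ i j, B i j = v i + v j) :
    Smap (A + B) = Smap A := by
  ext i j
  simp only [Smap, of_apply, Matrix.add_apply, hB]
  ring

theorem Smap_factored_row_translation_invariant_general
    (m k : ℕ)
    (D : Matrix (Fin m) (Fin m) ℝ)
    (Λ : Matrix (Fin m) (Fin k) ℝ) (c : Fin k → ℝ) :
    Smap (D + (Λ + Matrix.vecMulVec (fun _ => (1 : ℝ)) c)
            * (Λ + Matrix.vecMulVec (fun _ => (1 : ℝ)) c).transpose)
      = Smap (D + Λ * Λ.transpose) := by
  rw [← Pi.one_def, add_one_vecMulVec_mul_transpose, add_assoc (Λ * Λᵀ), add_assoc (Λ * Λᵀ),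
    ← add_assoc D]
  apply Smap_add_of_apply_eq_add _ _ fun i => (Λ *ᵥ c) i + c ⬝ᵥ c / 2
  intro i j
  simp only [Matrix.add_apply, Matrix.smul_apply, vecMulVec_apply, Pi.one_apply, smul_eq_mul]
  ring

/-- Translating every row of `Λ` by the same vector `c` leaves the matrix
`S(D + Λ Λᵀ)` of the factored covariance model unchanged:
`S(D + (Λ + 𝟙cᵀ)(Λ + 𝟙cᵀ)ᵀ) = S(D + Λ Λᵀ)`. -/
theorem Smap_factored_row_translation_invariant
    (m k : ℕ) (hm : 1 ≤ m)
    (D : Matrix (Fin m) (Fin m) ℝ) (hD : D.IsDiag)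
    (Λ : Matrix (Fin m) (Fin k) ℝ) (c : Fin k → ℝ) :
    Smap (D + (Λ + Matrix.vecMulVec (fun _ => (1 : ℝ)) c)
            * (Λ + Matrix.vecMulVec (fun _ => (1 : ℝ)) c).transpose)
      = Smap (D + Λ * Λ.transpose) :=
  Smap_factored_row_translation_invariant_general m k D Λ c
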